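/- (Proposition 2) Suppose Assumption 1 holds, γ_r > 0, γ_c > 0, and X = Σ_{r=1}^R Σ_{c=1}^C μ_{rc} χ_{A_r} χ_{B_c}^T for some real numbers μ_{rc}. Then Z = X is the unique global minimizer of F over ℝ^{n×p}. -/

import Mathlib

/-! `F ≥ 0`, and `F(Z) = 0` exactly when `Z` agrees with `X` on `Ω` and `J(Z) = 0`.
Since the weights are nonnegative, `J(Z) = 0` forces equal rows (columns) across every edge of the
row (column) graph, hence along every path, so `Z` is constant on each block `A_r × B_c`. The
biclustered `X` is such a matrix, so `F(X) = 0`; and a minimizer `Z` has `F(Z) = 0`, so it is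
block-constant and agrees with `X` on `Ω`, which meets every block by Assumption 1. -/

open Matrix BigOperators Finset

/-- The graph on `Fin n` with `i ~ j` iff `i ≠ j` and `w i j > 0` (for symmetric `w`). -/
def graphOf {n : ℕ} (w : Fin n → Fin n → ℝ) : SimpleGraph (Fin n) :=
  SimpleGraph.fromRel (fun i j => 0 < w i j)

/-- The 0/1 indicator vector of a subset. -/
noncomputable def chi {n : ℕ} (A : Set (Fin n)) : Fin n → ℝ :=
  A.indicator (fun _ => (1 : ℝ))

/-- The BMC smoothing penalty
`J(Z) = (γr/2) ∑_{i<j} w i j ‖Z_{i·} - Z_{j·}‖² + (γc/2) ∑_{i<j} w̃ i j ‖Z_{·i} - Z_{·j}‖²`. -/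
noncomputable def Jpen {n p : ℕ} (γr γc : ℝ) (w : Fin n → Fin n → ℝ)
    (wt : Fin p → Fin p → ℝ) (Z : Matrix (Fin n) (Fin p) ℝ) : ℝ :=
  γr / 2 * ∑ i, ∑ j ∈ Finset.Ioi i, w i j * ∑ k, (Z i k - Z j k) ^ 2
    + γc / 2 * ∑ i, ∑ j ∈ Finset.Ioi i, wt i j * ∑ k, (Z k i - Z k j) ^ 2

/-- The BMC objective `F(Z) = (1/2) ∑_{(i,j) ∈ Ω} (X i j - Z i j)² + J(Z)`. -/
noncomputable def objF {n p : ℕ} (Ω : Finset (Fin n × Fin p)) (X : Matrix (Fin n) (Fin p) ℝ)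
    (γr γc : ℝ) (w : Fin n → Fin n → ℝ) (wt : Fin p → Fin p → ℝ)
    (Z : Matrix (Fin n) (Fin p) ℝ) : ℝ :=
  (1 / 2) * ∑ q ∈ Ω, (X q.1 q.2 - Z q.1 q.2) ^ 2 + Jpen γr γc w wt Z

theorem SimpleGraph.Reachable.eq_of_forall_adj {V β : Type*} {G : SimpleGraph V} {f : V → β}
    (hf : ∀ u v, G.Adj u v → f u = f v) {u v : V} (h : G.Reachable u v) : f u = f v := by
  obtain ⟨p⟩ := h
  induction p with
  | nil => rfl
  | cons hadj _ ih => exact (hf _ _ hadj).trans ih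

lemma graphOf_adj_iff {n : ℕ} {w : Fin n → Fin n → ℝ} (hsymm : ∀ i j, w i j = w j i)
    {i j : Fin n} : (graphOf w).Adj i j ↔ i ≠ j ∧ 0 < w i j := by
  rw [graphOf, SimpleGraph.fromRel_adj, hsymm j i, or_self]

lemma sum_sq_sub_eq_zero_iff {ι : Type*} [Fintype ι] {x y : ι → ℝ} :
    ∑ k, (x k - y k) ^ 2 = 0 ↔ x = y := by
  simp only [sum_eq_zero_iff_of_nonneg (fun k _ => sq_nonneg (x k - y k)), mem_univ,
    forall_const, sq_eq_zero_iff, sub_eq_zero, funext_iff]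

section Dirichlet

variable {n m : ℕ} {w : Fin n → Fin n → ℝ}

def dirichletSum (w : Fin n → Fin n → ℝ) (u : Matrix (Fin n) (Fin m) ℝ) : ℝ :=
  ∑ i, ∑ j ∈ Ioi i, w i j * ∑ k, (u i k - u j k) ^ 2

lemma dirichletSum_nonneg (hw : ∀ i j, 0 ≤ w i j) (u : Matrix (Fin n) (Fin m) ℝ) :
    0 ≤ dirichletSum w u :=
  sum_nonneg fun i _ => sum_nonneg fun j _ =>
    mul_nonneg (hw i j) (sum_nonneg fun _ _ => sq_nonneg _)

lemma dirichletSum_eq_zero_iff_forall_lt (hw : ∀ i j, 0 ≤ w i j)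
    {u : Matrix (Fin n) (Fin m) ℝ} :
    dirichletSum w u = 0 ↔ ∀ i j, i < j → 0 < w i j → u i = u j := by
  have hterm : ∀ i j, 0 ≤ w i j * ∑ k, (u i k - u j k) ^ 2 := fun i j =>
    mul_nonneg (hw i j) (sum_nonneg fun _ _ => sq_nonneg _)
  simp only [dirichletSum, sum_eq_zero_iff_of_nonneg (fun i _ => sum_nonneg fun j _ => hterm i j),
    sum_eq_zero_iff_of_nonneg (fun j _ => hterm _ j), mem_univ, mem_Ioi, forall_const,
    mul_eq_zero, sum_sq_sub_eq_zero_iff]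
  refine forall₂_congr fun i j => imp_congr_right fun _ => ?_
  exact ⟨fun h hpos => h.resolve_left hpos.ne', fun h => (hw i j).eq_or_lt.imp Eq.symm h⟩

lemma dirichletSum_eq_zero_iff (hw : ∀ i j, 0 ≤ w i j) (hsymm : ∀ i j, w i j = w j i)
    {u : Matrix (Fin n) (Fin m) ℝ} :
    dirichletSum w u = 0 ↔ ∀ i j, (graphOf w).Reachable i j → u i = u j := by
  rw [dirichletSum_eq_zero_iff_forall_lt hw]
  refine ⟨fun h => fun i j => SimpleGraph.Reachable.eq_of_forall_adj fun i j hadj => ?_,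
    fun h i j hij hpos => h i j ((graphOf_adj_iff hsymm).2 ⟨hij.ne, hpos⟩).reachable⟩
  obtain ⟨hne, hpos⟩ := (graphOf_adj_iff hsymm).1 hadj
  rcases hne.lt_or_gt with hij | hji
  · exact h i j hij hpos
  · exact (h j i hji (hsymm i j ▸ hpos)).symm

end Dirichlet

section Objective

variable {n p : ℕ} {w : Fin n → Fin n → ℝ} {wt : Fin p → Fin p → ℝ}

def IsBlockConst (w : Fin n → Fin n → ℝ) (wt : Fin p → Fin p → ℝ)
    (Z : Matrix (Fin n) (Fin p) ℝ) : Prop :=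
  ∀ i i' j j', (graphOf w).Reachable i i' → (graphOf wt).Reachable j j' → Z i j = Z i' j'

lemma Jpen_eq_dirichletSum (γr γc : ℝ) (Z : Matrix (Fin n) (Fin p) ℝ) :
    Jpen γr γc w wt Z = γr / 2 * dirichletSum w Z + γc / 2 * dirichletSum wt Zᵀ :=
  rfl

lemma Jpen_nonneg {γr γc : ℝ} (hγr : 0 ≤ γr) (hγc : 0 ≤ γc) (hw : ∀ i j, 0 ≤ w i j)
    (hwt : ∀ i j, 0 ≤ wt i j) (Z : Matrix (Fin n) (Fin p) ℝ) : 0 ≤ Jpen γr γc w wt Z := by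
  rw [Jpen_eq_dirichletSum]
  have := dirichletSum_nonneg hw Z
  have := dirichletSum_nonneg hwt Zᵀ
  positivity

lemma Jpen_eq_zero_iff {γr γc : ℝ} (hγr : 0 < γr) (hγc : 0 < γc) (hw : ∀ i j, 0 ≤ w i j)
    (hsymm : ∀ i j, w i j = w j i) (hwt : ∀ i j, 0 ≤ wt i j) (hsymm' : ∀ i j, wt i j = wt j i)
    {Z : Matrix (Fin n) (Fin p) ℝ} : Jpen γr γc w wt Z = 0 ↔ IsBlockConst w wt Z := by
  have := dirichletSum_nonneg hw Z
  have := dirichletSum_nonneg hwt Zᵀ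
  rw [Jpen_eq_dirichletSum, add_eq_zero_iff_of_nonneg (by positivity) (by positivity),
    mul_eq_zero, mul_eq_zero, dirichletSum_eq_zero_iff hw hsymm,
    dirichletSum_eq_zero_iff hwt hsymm']
  simp only [hγr.ne', hγc.ne', div_eq_zero_iff, two_ne_zero, or_self, false_or]
  constructor
  · rintro ⟨hrow, hcol⟩ i i' j j' hi hj
    exact (congrFun (hrow i i' hi) j).trans (congrFun (hcol j j' hj) i')
  · intro h
    exact ⟨fun i i' hi => funext fun j => h i i' j j hi .rfl,
      fun j j' hj => funext fun i => h i i j j' .rfl hj⟩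

lemma objF_nonneg (Ω : Finset (Fin n × Fin p)) (X : Matrix (Fin n) (Fin p) ℝ) {γr γc : ℝ}
    (hγr : 0 ≤ γr) (hγc : 0 ≤ γc) (hw : ∀ i j, 0 ≤ w i j) (hwt : ∀ i j, 0 ≤ wt i j)
    (Z : Matrix (Fin n) (Fin p) ℝ) : 0 ≤ objF Ω X γr γc w wt Z := by
  have := Jpen_nonneg hγr hγc hw hwt Z
  unfold objF
  positivity

lemma objF_eq_zero_iff {Ω : Finset (Fin n × Fin p)} {X : Matrix (Fin n) (Fin p) ℝ} {γr γc : ℝ}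
    (hγr : 0 < γr) (hγc : 0 < γc) (hw : ∀ i j, 0 ≤ w i j) (hsymm : ∀ i j, w i j = w j i)
    (hwt : ∀ i j, 0 ≤ wt i j) (hsymm' : ∀ i j, wt i j = wt j i)
    {Z : Matrix (Fin n) (Fin p) ℝ} :
    objF Ω X γr γc w wt Z = 0 ↔
      (∀ q ∈ Ω, X q.1 q.2 = Z q.1 q.2) ∧ IsBlockConst w wt Z := by
  rw [objF, add_eq_zero_iff_of_nonneg (by positivity) (Jpen_nonneg hγr.le hγc.le hw hwt Z),
    Jpen_eq_zero_iff hγr hγc hw hsymm hwt hsymm', mul_eq_zero,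
    sum_eq_zero_iff_of_nonneg fun _ _ => sq_nonneg _]
  simp only [one_div, inv_eq_zero, OfNat.ofNat_ne_zero, false_or, sq_eq_zero_iff, sub_eq_zero]

lemma IsBlockConst.eq_of_eqOn {Ω : Finset (Fin n × Fin p)} {Y Z : Matrix (Fin n) (Fin p) ℝ}
    (hY : IsBlockConst w wt Y) (hZ : IsBlockConst w wt Z)
    (hΩ : ∀ i j, ∃ q ∈ Ω, (graphOf w).Reachable q.1 i ∧ (graphOf wt).Reachable q.2 j)
    (heq : ∀ q ∈ Ω, Y q.1 q.2 = Z q.1 q.2) : Y = Z := by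
  ext i j
  obtain ⟨q, hq, hi, hj⟩ := hΩ i j
  rw [← hY _ _ _ _ hi hj, heq q hq, hZ _ _ _ _ hi hj]

end Objective

lemma mem_iff_reachable {V : Type*} {G : SimpleGraph V} {k : ℕ} {A : Fin k → Set V}
    (e : G.ConnectedComponent ≃ Fin k) (hA : ∀ r, A r = {v | e (G.connectedComponentMk v) = r})
    (u v : V) :
    u ∈ A (e (G.connectedComponentMk v)) ↔ G.Reachable u v := by
  rw [hA, Set.mem_ofPred_eq, e.apply_eq_iff_eq, SimpleGraph.ConnectedComponent.eq]

lemma chi_eq_of_reachable {n k : ℕ} {G : SimpleGraph (Fin n)} {A : Fin k → Set (Fin n)}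
    (e : G.ConnectedComponent ≃ Fin k) (hA : ∀ r, A r = {v | e (G.connectedComponentMk v) = r})
    {u v : Fin n} (h : G.Reachable u v) (r : Fin k) : chi (A r) u = chi (A r) v := by
  simp only [chi, hA, Set.indicator_apply, Set.mem_ofPred_eq,
    SimpleGraph.ConnectedComponent.sound h]

lemma isBlockConst_of_eq_sum {n p R C : ℕ} {w : Fin n → Fin n → ℝ} {wt : Fin p → Fin p → ℝ}
    {A : Fin R → Set (Fin n)} (eA : (graphOf w).ConnectedComponent ≃ Fin R)
    (hA : ∀ r, A r = {v | eA ((graphOf w).connectedComponentMk v) = r})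
    {B : Fin C → Set (Fin p)} (eB : (graphOf wt).ConnectedComponent ≃ Fin C)
    (hB : ∀ c, B c = {v | eB ((graphOf wt).connectedComponentMk v) = c})
    (μ : Fin R → Fin C → ℝ) :
    IsBlockConst w wt (Matrix.of fun i j => ∑ r, ∑ c, μ r c * chi (A r) i * chi (B c) j) := by
  intro i i' j j' hi hj
  simp only [of_apply, chi_eq_of_reachable eA hA hi, chi_eq_of_reachable eB hB hj]

theorem exact_recovery_general {n p R C : ℕ} (Ω : Finset (Fin n × Fin p))
    (X : Matrix (Fin n) (Fin p) ℝ) (γr γc : ℝ) (hγr : 0 < γr) (hγc : 0 < γc)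
    (w : Fin n → Fin n → ℝ) (wt : Fin p → Fin p → ℝ)
    (hsymm : ∀ i j, w i j = w j i) (hnonneg : ∀ i j, 0 ≤ w i j)
    (hsymm' : ∀ i j, wt i j = wt j i) (hnonneg' : ∀ i j, 0 ≤ wt i j)
    (A : Fin R → Set (Fin n))
    (eA : (graphOf w).ConnectedComponent ≃ Fin R)
    (hA : ∀ r, A r = {v | eA ((graphOf w).connectedComponentMk v) = r})
    (B : Fin C → Set (Fin p))
    (eB : (graphOf wt).ConnectedComponent ≃ Fin C)
    (hB : ∀ c, B c = {v | eB ((graphOf wt).connectedComponentMk v) = c})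
    (hobs : ∀ r c, ∃ q ∈ Ω, q.1 ∈ A r ∧ q.2 ∈ B c)
    (μ : Fin R → Fin C → ℝ)
    (hX : X = Matrix.of fun i j => ∑ r, ∑ c, μ r c * chi (A r) i * chi (B c) j) :
    (∀ Z' : Matrix (Fin n) (Fin p) ℝ, objF Ω X γr γc w wt X ≤ objF Ω X γr γc w wt Z') ∧
    (∀ Z : Matrix (Fin n) (Fin p) ℝ,
      (∀ Z' : Matrix (Fin n) (Fin p) ℝ, objF Ω X γr γc w wt Z ≤ objF Ω X γr γc w wt Z')
        → Z = X) := by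
  have hXblock : IsBlockConst w wt X := hX ▸ isBlockConst_of_eq_sum eA hA eB hB μ
  have hFX : objF Ω X γr γc w wt X = 0 :=
    (objF_eq_zero_iff hγr hγc hnonneg hsymm hnonneg' hsymm').2 ⟨fun _ _ => rfl, hXblock⟩
  have hF_nonneg := objF_nonneg Ω X hγr.le hγc.le hnonneg hnonneg'
  refine ⟨fun Z' => hFX ▸ hF_nonneg Z', fun Z hmin => ?_⟩
  obtain ⟨hΩ, hZblock⟩ := (objF_eq_zero_iff hγr hγc hnonneg hsymm hnonneg' hsymm').1
    (le_antisymm (hFX ▸ hmin X) (hF_nonneg Z))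
  refine (hXblock.eq_of_eqOn hZblock (fun i j => ?_) hΩ).symm
  obtain ⟨q, hq, hq₁, hq₂⟩ := hobs (eA ((graphOf w).connectedComponentMk i))
    (eB ((graphOf wt).connectedComponentMk j))
  exact ⟨q, hq, (mem_iff_reachable eA hA _ _).1 hq₁, (mem_iff_reachable eB hB _ _).1 hq₂⟩

/-- Proposition 2: under Assumption 1, if `X` has the biclustered form
`X = ∑_{r,c} μ_{rc} χ_{A_r} χ_{B_c}ᵀ`, then `Z = X` is the unique global minimizer of `F`. -/
theorem exact_recovery {n p R C : ℕ} (Ω : Finset (Fin n × Fin p))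
    (X : Matrix (Fin n) (Fin p) ℝ) (γr γc : ℝ) (hγr : 0 < γr) (hγc : 0 < γc)
    (w : Fin n → Fin n → ℝ) (wt : Fin p → Fin p → ℝ)
    (hsymm : ∀ i j, w i j = w j i) (hnonneg : ∀ i j, 0 ≤ w i j)
    (hdiag : ∀ i, w i i = 0)
    (hsymm' : ∀ i j, wt i j = wt j i) (hnonneg' : ∀ i j, 0 ≤ wt i j)
    (hdiag' : ∀ i, wt i i = 0)
    (A : Fin R → Set (Fin n))
    (eA : (graphOf w).ConnectedComponent ≃ Fin R)
    (hA : ∀ r, A r = {v | eA ((graphOf w).connectedComponentMk v) = r})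
    (B : Fin C → Set (Fin p))
    (eB : (graphOf wt).ConnectedComponent ≃ Fin C)
    (hB : ∀ c, B c = {v | eB ((graphOf wt).connectedComponentMk v) = c})
    (hobs : ∀ r c, ∃ q ∈ Ω, q.1 ∈ A r ∧ q.2 ∈ B c)
    (μ : Fin R → Fin C → ℝ)
    (hX : X = Matrix.of fun i j => ∑ r, ∑ c, μ r c * chi (A r) i * chi (B c) j) :
    (∀ Z' : Matrix (Fin n) (Fin p) ℝ, objF Ω X γr γc w wt X ≤ objF Ω X γr γc w wt Z') ∧
    (∀ Z : Matrix (Fin n) (Fin p) ℝ,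
      (∀ Z' : Matrix (Fin n) (Fin p) ℝ, objF Ω X γr γc w wt Z ≤ objF Ω X γr γc w wt Z')
        → Z = X) :=
  exact_recovery_general Ω X γr γc hγr hγc w wt hsymm hnonneg hsymm' hnonneg' A eA hA B eB hB hobs μ
    hX
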